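/- Let f : ℝ^d × ℝ^d → ℝ^d be anti-symmetric (f(x,y) = -f(y,x)) and satisfy, for constants L ≥ 0 and p₀ ≥ 2: (i) (|x|^{p₀-2} - |y|^{p₀-2})⟨x+y, f(x,y)⟩ ≤ L(|x|^{p₀} + |y|^{p₀}); and let g : ℝ^d × ℝ^d → ℝ^{d×l} satisfy (ii) ⟨x-y, f(x,y)⟩ + 2(p₀-1)|g(x,y)|² ≤ L(1 + |x-y|²), for all x, y ∈ ℝ^d. Let μ be a Borel probability measure on ℝ^d with ∫|x|^{p₀} dμ(x) < ∞. Then ∫∫ |x|^{p₀-2} ( ⟨x, f(x,y)⟩ + (p₀-1)|g(x,y)|² ) dμ(x) dμ(y) ≤ (2L + (p₀-2)/(2p₀) + L/2) ∫ |x|^{p₀} dμ(x) + L^{p₀/2}/p₀. -/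

import Mathlib

open RealInnerProductSpace MeasureTheory

/-!
Writing `Φ(x, y) = ‖x‖^(p-2) (⟪x, f x y⟫ + (p-1) ‖g x y‖²)`, the swap `x ↔ y` shows that the
integral of `Φ` is half that of `Φ(x, y) + Φ(y, x)`. By anti-symmetry of `f` this sum equals
`(‖x‖^(p-2) - ‖y‖^(p-2)) ⟪x + y, f x y⟫ / 2`, controlled by (i), plus `‖x‖^(p-2) / 2` and
`‖y‖^(p-2) / 2` times the left-hand side of (ii) at `(x, y)` and at `(y, x)`. After
`‖x - y‖² ≤ 2‖x‖² + 2‖y‖²`, the mixed terms `L ‖x‖^(p-2)` and `‖x‖^(p-2) ‖y‖²` are absorbed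
into `‖x‖^p`, `‖y‖^p` and `L^(p/2)` by Young's inequality with exponents `p/(p-2)` and `p/2`.
-/

namespace Real

theorem rpow_sub_two_mul_sq {r p : ℝ} (hr : 0 ≤ r) (hp : p ≠ 0) :
    r ^ (p - 2) * r ^ 2 = r ^ p := by
  rw [← rpow_two, ← rpow_add' hr (by simpa using hp), sub_add_cancel]

/-- Young's inequality with the conjugate exponents `p / (p - 2)` and `p / 2`. -/
theorem rpow_sub_two_mul_le {a b p : ℝ} (ha : 0 ≤ a) (hb : 0 ≤ b) (hp : 2 ≤ p) :
    a ^ (p - 2) * b ≤ (p - 2) / p * a ^ p + 2 / p * b ^ (p / 2) := by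
  have hp0 : p ≠ 0 := by positivity
  have key := geom_mean_le_arith_mean2_weighted (w₁ := (p - 2) / p) (w₂ := 2 / p)
    (div_nonneg (by linarith) (by linarith)) (by positivity) (rpow_nonneg ha p)
    (rpow_nonneg hb (p / 2)) (by field_simp; ring)
  have hexp : p / 2 * (2 / p) = 1 := by field_simp
  rwa [← rpow_mul ha, ← rpow_mul hb, mul_div_cancel₀ _ hp0, hexp, rpow_one] at key

theorem rpow_sub_two_mul_sq_add_le {a b p : ℝ} (ha : 0 ≤ a) (hb : 0 ≤ b) (hp : 2 ≤ p) :
    a ^ (p - 2) * b ^ 2 + b ^ (p - 2) * a ^ 2 ≤ a ^ p + b ^ p := by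
  have hsq {r : ℝ} (hr : 0 ≤ r) : (r ^ 2) ^ (p / 2) = r ^ p := by
    rw [← rpow_natCast, ← rpow_mul hr, Nat.cast_two, mul_div_cancel₀ _ two_ne_zero]
  have hab := rpow_sub_two_mul_le ha (sq_nonneg b) hp
  have hba := rpow_sub_two_mul_le hb (sq_nonneg a) hp
  rw [hsq hb] at hab
  rw [hsq ha] at hba
  have hw (A : ℝ) : (p - 2) / p * A + 2 / p * A = A := by
    rw [← add_mul, ← add_div, sub_add_cancel, div_self (by positivity), one_mul]
  linarith [hw (a ^ p), hw (b ^ p)]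

theorem rpow_sub_two_add_mul_one_add_sq_le {r s L p : ℝ} (hr : 0 ≤ r) (hs : 0 ≤ s) (hL : 0 ≤ L)
    (hp : 2 ≤ p) :
    (r ^ (p - 2) + s ^ (p - 2)) / 2 * (L * (1 + 2 * r ^ 2 + 2 * s ^ 2))
      ≤ (2 * L + (p - 2) / (2 * p)) * (r ^ p + s ^ p) + 2 * (L ^ (p / 2) / p) := by
  have hp0 : p ≠ 0 := by positivity
  have hr' := rpow_sub_two_mul_le hr hL hp
  have hs' := rpow_sub_two_mul_le hs hL hp
  have hcross := mul_le_mul_of_nonneg_left (rpow_sub_two_mul_sq_add_le hr hs hp) hL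
  have hdiag : r ^ (p - 2) * r ^ 2 + s ^ (p - 2) * s ^ 2 = r ^ p + s ^ p := by
    rw [rpow_sub_two_mul_sq hr hp0, rpow_sub_two_mul_sq hs hp0]
  linear_combination (hr' + hs') / 2 + hcross + L * hdiag

end Real

section Symmetrization

variable {α : Type*} [MeasurableSpace α] {μ : Measure α} [IsProbabilityMeasure μ]

theorem integral_prod_le_of_add_swap_le {F : α × α → ℝ} {G : α → ℝ} {c : ℝ}
    (hF : Integrable F (μ.prod μ)) (hG : Integrable G μ)
    (hbound : ∀ z, F z + F z.swap ≤ G z.1 + G z.2 + 2 * c) :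
    ∫ z, F z ∂(μ.prod μ) ≤ ∫ x, G x ∂μ + c := by
  have hG₂ : Integrable (fun z : α × α => G z.1 + G z.2) (μ.prod μ) :=
    (hG.comp_fst μ).add (hG.comp_snd μ)
  have hFswap : Integrable (fun z => F z.swap) (μ.prod μ) := hF.swap
  have hsum : ∫ z, (F z + F z.swap) ∂(μ.prod μ) = 2 * ∫ z, F z ∂(μ.prod μ) := by
    rw [integral_add hF hFswap, integral_prod_swap, two_mul]
  have hG_int : ∫ z, (G z.1 + G z.2 + 2 * c) ∂(μ.prod μ) = 2 * ∫ x, G x ∂μ + 2 * c := by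
    rw [integral_add hG₂ (integrable_const _), integral_add (hG.comp_fst μ) (hG.comp_snd μ),
      integral_fun_fst, integral_fun_snd]
    simp [two_mul]
  have hmono : ∫ z, (F z + F z.swap) ∂(μ.prod μ) ≤ ∫ z, (G z.1 + G z.2 + 2 * c) ∂(μ.prod μ) :=
    integral_mono (hF.add hFswap) (hG₂.add (integrable_const _)) hbound
  linarith

end Symmetrization

section MomentIntegrand

variable {E G : Type*} [NormedAddCommGroup E] [InnerProductSpace ℝ E] [NormedAddCommGroup G]

noncomputable def momentIntegrand (p : ℝ) (f : E → E → E) (g : E → E → G) (x y : E) : ℝ :=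
  ‖x‖ ^ (p - 2) * (⟪x, f x y⟫ + (p - 1) * ‖g x y‖ ^ 2)

variable {f : E → E → E} {g : E → E → G} {L p : ℝ}

theorem momentIntegrand_add_swap (hanti : ∀ x y, f x y = - f y x) (x y : E) :
    momentIntegrand p f g x y + momentIntegrand p f g y x
      = (‖x‖ ^ (p - 2) - ‖y‖ ^ (p - 2)) * ⟪x + y, f x y⟫ / 2
        + ‖x‖ ^ (p - 2) / 2 * (⟪x - y, f x y⟫ + 2 * (p - 1) * ‖g x y‖ ^ 2)
        + ‖y‖ ^ (p - 2) / 2 * (⟪x - y, f x y⟫ + 2 * (p - 1) * ‖g y x‖ ^ 2) := by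
  simp only [momentIntegrand, hanti y x, inner_neg_right, inner_add_left, inner_sub_left]
  ring

theorem momentIntegrand_add_swap_le (hL : 0 ≤ L) (hp : 2 ≤ p) (hanti : ∀ x y, f x y = - f y x)
    (h1 : ∀ x y : E,
      (‖x‖ ^ (p - 2) - ‖y‖ ^ (p - 2)) * ⟪x + y, f x y⟫ ≤ L * (‖x‖ ^ p + ‖y‖ ^ p))
    (h2 : ∀ x y : E, ⟪x - y, f x y⟫ + 2 * (p - 1) * ‖g x y‖ ^ 2 ≤ L * (1 + ‖x - y‖ ^ 2))
    (x y : E) :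
    momentIntegrand p f g x y + momentIntegrand p f g y x
      ≤ (2 * L + (p - 2) / (2 * p) + L / 2) * ‖x‖ ^ p
        + (2 * L + (p - 2) / (2 * p) + L / 2) * ‖y‖ ^ p + 2 * (L ^ (p / 2) / p) := by
  have hdist : ‖x - y‖ ^ 2 ≤ 2 * ‖x‖ ^ 2 + 2 * ‖y‖ ^ 2 := by
    nlinarith [norm_sub_le x y, norm_nonneg (x - y), sq_nonneg (‖x‖ - ‖y‖)]
  have hLdist := mul_le_mul_of_nonneg_left hdist hL
  have hxy : ⟪x - y, f x y⟫ + 2 * (p - 1) * ‖g x y‖ ^ 2 ≤ L * (1 + 2 * ‖x‖ ^ 2 + 2 * ‖y‖ ^ 2) := by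
    linarith [h2 x y]
  have hyx : ⟪x - y, f x y⟫ + 2 * (p - 1) * ‖g y x‖ ^ 2 ≤ L * (1 + 2 * ‖x‖ ^ 2 + 2 * ‖y‖ ^ 2) := by
    have h := h2 y x
    rw [norm_sub_rev, hanti y x, inner_neg_right, ← inner_neg_left, neg_sub] at h
    linarith
  have hx : 0 ≤ ‖x‖ ^ (p - 2) / 2 := by positivity
  have hy : 0 ≤ ‖y‖ ^ (p - 2) / 2 := by positivity
  rw [momentIntegrand_add_swap hanti]
  linear_combination h1 x y / 2 + mul_le_mul_of_nonneg_left hxy hx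
    + mul_le_mul_of_nonneg_left hyx hy
    + Real.rpow_sub_two_add_mul_one_add_sq_le (norm_nonneg x) (norm_nonneg y) hL hp

end MomentIntegrand

theorem stmt17 (d l : ℕ)
    (f : EuclideanSpace ℝ (Fin d) → EuclideanSpace ℝ (Fin d) → EuclideanSpace ℝ (Fin d))
    (g : EuclideanSpace ℝ (Fin d) → EuclideanSpace ℝ (Fin d) → EuclideanSpace ℝ (Fin d × Fin l))
    (L p₀ : ℝ) (hL : 0 ≤ L) (hp₀ : 2 ≤ p₀)
    (hanti : ∀ x y : EuclideanSpace ℝ (Fin d), f x y = - f y x)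
    (h1 : ∀ x y : EuclideanSpace ℝ (Fin d),
      (‖x‖ ^ (p₀ - 2) - ‖y‖ ^ (p₀ - 2)) * ⟪x + y, f x y⟫ ≤ L * (‖x‖ ^ p₀ + ‖y‖ ^ p₀))
    (h2 : ∀ x y : EuclideanSpace ℝ (Fin d),
      ⟪x - y, f x y⟫ + 2 * (p₀ - 1) * ‖g x y‖ ^ 2 ≤ L * (1 + ‖x - y‖ ^ 2))
    (μ : Measure (EuclideanSpace ℝ (Fin d))) [IsProbabilityMeasure μ]
    (hmom : Integrable (fun x => ‖x‖ ^ p₀) μ)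
    (hint : Integrable
      (fun pr : EuclideanSpace ℝ (Fin d) × EuclideanSpace ℝ (Fin d) =>
        ‖pr.1‖ ^ (p₀ - 2) * (⟪pr.1, f pr.1 pr.2⟫ + (p₀ - 1) * ‖g pr.1 pr.2‖ ^ 2))
      (μ.prod μ)) :
    ∫ pr : EuclideanSpace ℝ (Fin d) × EuclideanSpace ℝ (Fin d),
        ‖pr.1‖ ^ (p₀ - 2) * (⟪pr.1, f pr.1 pr.2⟫ + (p₀ - 1) * ‖g pr.1 pr.2‖ ^ 2) ∂(μ.prod μ)
      ≤ (2 * L + (p₀ - 2) / (2 * p₀) + L / 2) * (∫ x, ‖x‖ ^ p₀ ∂μ) + L ^ (p₀ / 2) / p₀ := by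
  rw [← integral_const_mul]
  exact integral_prod_le_of_add_swap_le (F := fun z => momentIntegrand p₀ f g z.1 z.2) hint
    (hmom.const_mul _) fun z => momentIntegrand_add_swap_le hL hp₀ hanti h1 h2 z.1 z.2
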